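/- arXiv:1601.04943 — 6 statements merged into one kernel-verified Lean document; each statement's English description precedes it below -/
import Mathlib

section
/- Let α, β, γ be measurable spaces. Define the weighted bind of a measure p on ℝ≥0 × α along a measurable map f : α → Measure(ℝ≥0 × β) by wbind(p,f) = p.bind(fun (r,a) => (f a).map(fun (s,b) => (r·s, b))). Let p be a probability measure on ℝ≥0 × α, let f : α → Measure(ℝ≥0 × β) and g : β → Measure(ℝ≥0 × γ) be measurable maps all of whose values are probability measures. Then wbind(wbind(p,f), g) = wbind(p, fun a => wbind(f a, g)). -/
/-! Unfolding `wbind`, both sides are binds of `p`, and the Giry monad's `bind_bind` reduces the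
claim to one fibre `(r, a)`: rescaling the first coordinate by `r` before a weighted bind along `g`
is the same as rescaling after it, because scores multiply associatively,
`r * (s * t) = (r * s) * t`. The only analytic input is the measurability of the families of
rescaled measures that are bound, which holds for Markov kernels. -/

open MeasureTheory
open scoped ENNReal NNReal

/-- The weighted bind of a measure on `ℝ≥0 × α` along `f : α → Measure (ℝ≥0 × β)`:
scores multiply along the composition. -/
noncomputable def wbind {α β : Type*} [MeasurableSpace α] [MeasurableSpace β]
    (p : Measure (ℝ≥0 × α)) (f : α → Measure (ℝ≥0 × β)) : Measure (ℝ≥0 × β) :=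
  p.bind (fun ra => (f ra.2).map (fun sb => (ra.1 * sb.1, sb.2)))

open ProbabilityTheory

namespace MeasureTheory.Measure

variable {α β γ : Type*} [MeasurableSpace α] [MeasurableSpace β] [MeasurableSpace γ]

theorem map_bind (m : Measure α) {f : α → Measure β} (hf : Measurable f) {φ : β → γ}
    (hφ : Measurable φ) : (m.bind f).map φ = m.bind fun x => (f x).map φ := by
  have hδφ : Measurable fun y => dirac (φ y) := measurable_dirac.comp hφ
  rw [← bind_dirac_eq_map _ hφ, bind_bind hf.aemeasurable hδφ.aemeasurable]
  simp_rw [bind_dirac_eq_map _ hφ]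

theorem bind_map (m : Measure α) {φ : α → β} (hφ : Measurable φ) {g : β → Measure γ}
    (hg : Measurable g) : (m.map φ).bind g = m.bind (g ∘ φ) := by
  have hδφ : Measurable fun x => dirac (φ x) := measurable_dirac.comp hφ
  rw [← bind_dirac_eq_map _ hφ, bind_bind hδφ.aemeasurable hg.aemeasurable]
  simp_rw [dirac_bind hg]
  rfl

end MeasureTheory.Measure

theorem ProbabilityTheory.Kernel.measurable_map_apply {α β γ : Type*} [MeasurableSpace α]
    [MeasurableSpace β] [MeasurableSpace γ] (κ : Kernel α β) [IsSFiniteKernel κ]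
    {φ : α → β → γ} (hφ : Measurable (Function.uncurry φ)) :
    Measurable fun a => (κ a).map (φ a) := by
  refine Measure.measurable_of_measurable_coe _ fun s hs => ?_
  have hsection (a : α) :
      (κ a).map (φ a) s = κ a (Prod.mk a ⁻¹' (Function.uncurry φ ⁻¹' s)) :=
    Measure.map_apply (hφ.comp measurable_prodMk_left) hs
  simp_rw [hsection]
  exact κ.measurable_kernel_prodMk_left (hφ hs)

section wbind

variable {α β γ : Type*} [MeasurableSpace α] [MeasurableSpace β] [MeasurableSpace γ]

theorem measurable_mul_fst (r : ℝ≥0) : Measurable fun sb : ℝ≥0 × β => (r * sb.1, sb.2) :=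
  (measurable_const.mul measurable_fst).prodMk measurable_snd

theorem measurable_map_mul_fst (f : α → Measure (ℝ≥0 × β)) (hf : Measurable f)
    (hfprob : ∀ a, IsProbabilityMeasure (f a)) :
    Measurable fun ra : ℝ≥0 × α => (f ra.2).map fun sb => (ra.1 * sb.1, sb.2) := by
  let κ : Kernel α (ℝ≥0 × β) := ⟨f, hf⟩
  have : IsMarkovKernel κ := ⟨hfprob⟩
  exact (κ.comap Prod.snd measurable_snd).measurable_map_apply
    (((measurable_fst.comp measurable_fst).mul (measurable_fst.comp measurable_snd)).prodMk
      (measurable_snd.comp measurable_snd))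

theorem wbind_map_mul_fst (μ : Measure (ℝ≥0 × β)) (g : β → Measure (ℝ≥0 × γ))
    (hG : Measurable fun sb : ℝ≥0 × β => (g sb.2).map fun tc => (sb.1 * tc.1, tc.2)) (r : ℝ≥0) :
    wbind (μ.map fun sb => (r * sb.1, sb.2)) g = (wbind μ g).map fun tc => (r * tc.1, tc.2) := by
  rw [wbind, wbind, Measure.bind_map _ (measurable_mul_fst r) hG,
    Measure.map_bind _ hG (measurable_mul_fst r)]
  congr 1
  funext sb
  rw [Function.comp_apply, Measure.map_map (measurable_mul_fst r) (measurable_mul_fst _)]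
  simp only [Function.comp_def, mul_assoc]

end wbind

theorem stmt2_general {α β γ : Type*} [MeasurableSpace α] [MeasurableSpace β] [MeasurableSpace γ]
    (p : Measure (ℝ≥0 × α))
    (f : α → Measure (ℝ≥0 × β)) (hf : Measurable f)
    (hfprob : ∀ a, IsProbabilityMeasure (f a))
    (g : β → Measure (ℝ≥0 × γ)) (hg : Measurable g)
    (hgprob : ∀ b, IsProbabilityMeasure (g b)) :
    wbind (wbind p f) g = wbind p (fun a => wbind (f a) g) := by
  have hG := measurable_map_mul_fst g hg hgprob
  calc wbind (wbind p f) g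
      = p.bind fun ra => wbind ((f ra.2).map fun sb => (ra.1 * sb.1, sb.2)) g :=
        Measure.bind_bind (measurable_map_mul_fst f hf hfprob).aemeasurable hG.aemeasurable
    _ = wbind p (fun a => wbind (f a) g) := by
        simp_rw [wbind_map_mul_fst _ g hG]
        rfl

/-- associativity law for the monad `P(ℝ≥0 × (−))`. -/
theorem stmt2 {α β γ : Type*} [MeasurableSpace α] [MeasurableSpace β] [MeasurableSpace γ]
    (p : Measure (ℝ≥0 × α)) (hp : IsProbabilityMeasure p)
    (f : α → Measure (ℝ≥0 × β)) (hf : Measurable f)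
    (hfprob : ∀ a, IsProbabilityMeasure (f a))
    (g : β → Measure (ℝ≥0 × γ)) (hg : Measurable g)
    (hgprob : ∀ b, IsProbabilityMeasure (g b)) :
    wbind (wbind p f) g = wbind p (fun a => wbind (f a) g) :=
  stmt2_general p f hf hfprob g hg hgprob
end

section
/- Let α and β be measurable spaces, and let p be a probability measure on ℝ≥0 × α and q a probability measure on ℝ≥0 × β. Then p.bind(fun (r,a) => q.map(fun (s,b) => (r·s, (a,b)))) = q.bind(fun (s,b) => p.map(fun (r,a) => (r·s, (a,b)))), as measures on ℝ≥0 × (α × β). -/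
open MeasureTheory
open scoped NNReal

/-! Both sides are the pushforward of a product measure under the same map: `Measure.prod` is
itself defined as a bind, and `μ.prod ν` and `ν.prod μ` agree up to `Prod.swap` for s-finite
measures (Tonelli). The weight product `r * s` plays no role beyond measurability. -/

namespace MeasureTheory.Measure

variable {X Y Z : Type*} [MeasurableSpace X] [MeasurableSpace Y] [MeasurableSpace Z]

theorem bind_map_eq_map_prod (μ : Measure X) (ν : Measure Y) [SFinite ν] {f : X × Y → Z}
    (hf : Measurable f) :
    μ.bind (fun x => ν.map (fun y => f (x, y))) = (μ.prod ν).map f := by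
  rw [Measure.prod, bind, bind, ← join_map_map hf,
    map_map (measurable_map f hf) Measurable.map_prodMk_left]
  congr
  funext x
  exact (map_map hf measurable_prodMk_left).symm

theorem bind_map_comm (μ : Measure X) (ν : Measure Y) [SFinite μ] [SFinite ν]
    {f : X × Y → Z} (hf : Measurable f) :
    μ.bind (fun x => ν.map (fun y => f (x, y))) = ν.bind (fun y => μ.map (fun x => f (x, y))) := by
  rw [bind_map_eq_map_prod μ ν hf, ← prod_swap,
    map_map hf measurable_swap, ← bind_map_eq_map_prod ν μ (hf.comp measurable_swap)]
  rfl

end MeasureTheory.Measure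

/-- commutativity (Fubini) law for the monad `P(ℝ≥0 × (−))`. -/
theorem stmt3 {α β : Type*} [MeasurableSpace α] [MeasurableSpace β]
    (p : Measure (ℝ≥0 × α)) (hp : IsProbabilityMeasure p)
    (q : Measure (ℝ≥0 × β)) (hq : IsProbabilityMeasure q) :
    p.bind (fun ra => q.map (fun sb => (ra.1 * sb.1, (ra.2, sb.2)))) =
    q.bind (fun sb => p.map (fun ra => (ra.1 * sb.1, (ra.2, sb.2)))) :=
  Measure.bind_map_comm p q (f := fun x => (x.1.1 * x.2.1, (x.1.2, x.2.2))) (by fun_prop)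
end

section
/- Let X and Y be measurable spaces and h : X → Y a measurable function. For a probability measure p on ℝ≥0 × X, define the unnormalized posterior p̄ = (p.withDensity(fun (r,x) => r)).map(Prod.snd), a measure on X. Then normalization is natural in X: for every probability measure p on ℝ≥0 × X, the pushforward of p̄ along h equals the unnormalized posterior of the pushforward of p along id × h, that is, p̄.map(h) = (p.map(Prod.map id h))‾. -/
open MeasureTheory
open scoped ENNReal NNReal

lemma withDensity_map_eq_map_withDensity_comp {α β : Type*} [MeasurableSpace α]
    [MeasurableSpace β] (μ : Measure α) {g : α → β} (hg : Measurable g) {f : β → ℝ≥0∞}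
    (hf : Measurable f) :
    (μ.map g).withDensity f = (μ.withDensity (f ∘ g)).map g := by
  ext s hs
  rw [withDensity_apply _ hs, Measure.map_apply hg hs, withDensity_apply _ (hg hs),
    setLIntegral_map hs hf hg]
  rfl

theorem stmt5_general {X Y : Type*} [MeasurableSpace X] [MeasurableSpace Y]
    (h : X → Y) (hh : Measurable h)
    (p : Measure (ℝ≥0 × X)) :
    ((p.withDensity (fun rx => (rx.1 : ℝ≥0∞))).map Prod.snd).map h =
    ((p.map (Prod.map id h)).withDensity (fun ry => (ry.1 : ℝ≥0∞))).map Prod.snd := by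
  have hidh : Measurable (Prod.map (id : ℝ≥0 → ℝ≥0) h) := measurable_id.prodMap hh
  rw [withDensity_map_eq_map_withDensity_comp p hidh (by fun_prop),
    Measure.map_map measurable_snd hidh, Measure.map_map hh measurable_snd]
  -- the density `(r, y) ↦ r` pulls back along `id × h` to `(r, x) ↦ r`, and
  -- `Prod.snd ∘ Prod.map id h = h ∘ Prod.snd`, both definitionally
  rfl

/-- the unnormalized-posterior construction
`p̄ = (p.withDensity (fun (r,x) => r)).map Prod.snd` is natural in `X`:
for measurable `h : X → Y`, `p̄.map h = (p.map (Prod.map id h))‾`. -/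
theorem stmt5 {X Y : Type*} [MeasurableSpace X] [MeasurableSpace Y]
    (h : X → Y) (hh : Measurable h)
    (p : Measure (ℝ≥0 × X)) (hp : IsProbabilityMeasure p) :
    ((p.withDensity (fun rx => (rx.1 : ℝ≥0∞))).map Prod.snd).map h =
    ((p.map (Prod.map id h)).withDensity (fun ry => (ry.1 : ℝ≥0∞))).map Prod.snd :=
  stmt5_general h hh p
end

section
/- Let C be a small category with countable coproducts. Then the full subcategory of the presheaf-style functor category C^op ⥤ Type consisting of those functors that preserve countable products (i.e., that preserve limits of every countable discrete shape in C^op) has all (small) colimits. -/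
open CategoryTheory CategoryTheory.Limits

universe u

/-- A presheaf `F : Cᵒᵖ ⥤ Type` preserves countable products when it preserves limits of
every countable discrete shape in `Cᵒᵖ`. -/
def PreservesCountableProducts' {C : Type u} [SmallCategory C] (F : Cᵒᵖ ⥤ Type u) : Prop :=
  ∀ (J : Type u), Countable J → Nonempty (PreservesLimitsOfShape (Discrete J) F)

/-!
A presheaf `P` preserves the limit of `K : J ⥤ Cᵒᵖ` iff it is local with respect to the
comparison map `colim (yoneda ∘ K) ⟶ yoneda (lim K)`. Every countable type is in bijection
with a subset of `ℕ`, so preserving countable products is locality with respect to a small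
set of maps, whose sources are countable colimits of representables and whose targets are
representable; all of them are `ℵ₁`-presentable. By the orthogonal-reflection construction
the local objects then form a reflective subcategory of the locally presentable category
`Cᵒᵖ ⥤ Type u`, which is therefore cocomplete.
-/

open Cardinal

section Presentability

variable {C : Type u} [SmallCategory C] (κ : Cardinal.{u}) [Fact κ.IsRegular]

instance isCardinalPresentable_shrinkYoneda_obj (X : C) :
    IsCardinalPresentable (shrinkYoneda.{u}.obj X) κ :=
  isCardinalPresentable_of_iso (uliftYonedaIsoShrinkYoneda.{0}.app X) κ

lemma isCardinalPresentable_preservesLimitHomFamilySrc {J : Type u} [SmallCategory J]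
    (K : J ⥤ Cᵒᵖ) (hJ : HasCardinalLT (Arrow J) κ) :
    IsCardinalPresentable (Presheaf.preservesLimitHomFamilySrc K) κ :=
  have (j : Jᵒᵖ) : IsCardinalPresentable ((K.leftOp ⋙ shrinkYoneda).obj j) κ :=
    isCardinalPresentable_shrinkYoneda_obj κ _
  isCardinalPresentable_of_isColimit _ (colimit.isColimit _) κ
    ((hasCardinalLT_arrow_op_iff J κ).2 hJ)

end Presentability

namespace PreservesCountableProducts'

variable (C : Type u) [SmallCategory C]

lemma eq_iInf_preservesLimitsOfShape :
    PreservesCountableProducts' (C := C) =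
      ⨅ S : Set ℕ, ObjectProperty.preservesLimitsOfShape (Discrete (ULift.{u} S)) := by
  ext F
  simp only [iInf_apply, iInf_Prop_eq, ObjectProperty.preservesLimitsOfShape_iff]
  refine ⟨fun hF S => (hF (ULift S) inferInstance).some, fun hF J _ => ?_⟩
  obtain ⟨f, hf⟩ := countable_iff_exists_injective J |>.mp ‹_›
  let e : ULift.{u} (Set.range f) ≃ J := Equiv.ulift.trans (Equiv.ofInjective f hf).symm
  exact ⟨preservesLimitsOfShape_of_equiv (Discrete.equivalence e) F⟩

def localizingHoms : MorphismProperty (Cᵒᵖ ⥤ Type u) :=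
  ⨆ (S : Set ℕ) (K : Discrete (ULift.{u} S) ⥤ Cᵒᵖ),
    MorphismProperty.ofHoms (Presheaf.preservesLimitHomFamily K)

instance : MorphismProperty.IsSmall.{u} (localizingHoms C) := by
  unfold localizingHoms
  infer_instance

lemma eq_isLocal : PreservesCountableProducts' (C := C) = (localizingHoms C).isLocal := by
  rw [eq_iInf_preservesLimitsOfShape, localizingHoms, MorphismProperty.isLocal_iSup]
  simp only [Presheaf.preservesLimitsOfShape_eq_isLocal]

lemma isCardinalPresentable_of_localizingHoms (κ : Cardinal.{u}) [Fact κ.IsRegular]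
    (hκ : ℵ₀ < κ) ⦃X Y : Cᵒᵖ ⥤ Type u⦄ (f : X ⟶ Y) (hf : localizingHoms C f) :
    IsCardinalPresentable X κ ∧ IsCardinalPresentable Y κ := by
  simp only [localizingHoms, MorphismProperty.iSup_iff] at hf
  obtain ⟨S, K, ⟨h⟩⟩ := hf
  have hS : HasCardinalLT (Arrow (Discrete (ULift.{u} S))) κ := by
    rw [hasCardinalLT_arrow_discrete_iff, hasCardinalLT_iff_cardinal_mk_lt]
    exact mk_le_aleph0.trans_lt hκ
  exact ⟨isCardinalPresentable_preservesLimitHomFamilySrc κ K hS,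
    isCardinalPresentable_shrinkYoneda_obj κ _⟩

end PreservesCountableProducts'

theorem stmt9_general {C : Type u} [SmallCategory C] :
    HasColimits (ObjectProperty.FullSubcategory (PreservesCountableProducts' (C := C))) := by
  have : Fact (ℵ₁ : Cardinal.{u}).IsRegular := ⟨isRegular_aleph_one⟩
  let W := PreservesCountableProducts'.localizingHoms C
  rw [PreservesCountableProducts'.eq_isLocal]
  have := MorphismProperty.isRightAdjoint_ι_isLocal W ℵ₁
    (PreservesCountableProducts'.isCardinalPresentable_of_localizingHoms C ℵ₁ aleph0_lt_aleph_one)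
  have : Reflective W.isLocal.ι := { L := _, adj := Adjunction.ofIsRightAdjoint _ }
  exact hasColimits_of_reflective W.isLocal.ι

/-- if a small category `C` has countable coproducts, then the full
subcategory of `Cᵒᵖ ⥤ Type` of countable-product-preserving functors has all small
colimits. -/
theorem stmt9 {C : Type u} [SmallCategory C]
    (hC : ∀ (J : Type u), Countable J → HasColimitsOfShape (Discrete J) C) :
    HasColimits (ObjectProperty.FullSubcategory (PreservesCountableProducts' (C := C))) :=
  stmt9_general
end

section
/- Let C be a small category with countable coproducts, let J be a countable index set, and let c : J → C be a family of objects with coproduct ∐_j c_j. Each representable presheaf C(−, x) preserves countable products, hence lies in the full subcategory of C^op ⥤ Type of countable-product-preserving functors; and the cocone in this full subcategory with vertex C(−, ∐_j c_j) and legs given by postcomposition with the coproduct injections c_j ⟶ ∐_j c_j is a colimit cocone. In other words, the Yoneda embedding y : C → C̄, y(c) = C(−,c), into the category C̄ of countable-product-preserving presheaves preserves countable coproducts. -/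
/-!
Maps in the full subcategory from the image of `x` under Yoneda to a presheaf `F` are the
elements of `F(x)`. Hence, for a coproduct `∐ⱼ cⱼ` in `C`,
`Hom(y(∐ⱼ cⱼ), F) = F(∐ⱼ cⱼ) ≅ ∏ⱼ F(cⱼ) = ∏ⱼ Hom(y cⱼ, F)` exactly because `F` preserves
countable products, and since the hom functors jointly reflect colimits, `y(∐ⱼ cⱼ)` is the
coproduct of the `y cⱼ` in the subcategory.
-/

open CategoryTheory CategoryTheory.Limits

universe u

namespace CategoryTheory.ObjectProperty

variable {C : Type u} [SmallCategory C] (P : ObjectProperty (Cᵒᵖ ⥤ Type u))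
  (hP : ∀ x : C, P (yoneda.obj x))

noncomputable def liftYonedaOpCompYonedaObjIso (F : P.FullSubcategory) :
    (P.lift yoneda hP).op ⋙ yoneda.obj F ≅ F.obj :=
  NatIso.ofComponents (fun x => (P.fullyFaithfulι.homEquiv.trans yonedaEquiv).toIso)
    (fun g => by
      ext f
      exact (yonedaEquiv_naturality' f.hom g).symm)

noncomputable def isColimitLiftYonedaMapCocone {K : Type*} [Category K] {G : K ⥤ C}
    {c : Cocone G} (hc : IsColimit c) (hG : ∀ F, P F → PreservesLimit G.op F) :
    IsColimit ((P.lift yoneda hP).mapCocone c) :=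
  (Cocone.isColimitYonedaEquiv _).symm fun F =>
    have := hG F.obj F.property
    IsLimit.mapConeEquiv (liftYonedaOpCompYonedaObjIso P hP F).symm
      (isLimitOfPreserves F.obj hc.op)

lemma preservesColimitsOfShape_lift_yoneda {K : Type*} [Category K]
    (hK : ∀ F, P F → PreservesLimitsOfShape Kᵒᵖ F) :
    PreservesColimitsOfShape K (P.lift yoneda hP) where
  preservesColimit := ⟨fun hc =>
    ⟨isColimitLiftYonedaMapCocone P hP hc fun F hF => have := hK F hF; inferInstance⟩⟩

end CategoryTheory.ObjectProperty

lemma preservesCountableProducts'_yoneda_obj {C : Type u} [SmallCategory C] (x : C) :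
    PreservesCountableProducts' (yoneda.obj x) :=
  fun _ _ => ⟨inferInstance⟩

lemma PreservesCountableProducts'.preservesLimitsOfShape_op_discrete {C : Type u}
    [SmallCategory C] {F : Cᵒᵖ ⥤ Type u} (hF : PreservesCountableProducts' F) (J : Type u)
    [Countable J] : PreservesLimitsOfShape (Discrete J)ᵒᵖ F :=
  have := (hF J inferInstance).some
  preservesLimitsOfShape_of_equiv (Discrete.opposite J).symm F

theorem stmt10_general {C : Type u} [SmallCategory C] :
    ∃ hrep : ∀ x : C, PreservesCountableProducts' (yoneda.obj x),
      ∀ (J : Type u), Countable J →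
        Nonempty (PreservesColimitsOfShape (Discrete J)
          (ObjectProperty.lift (PreservesCountableProducts' (C := C)) yoneda hrep)) :=
  ⟨preservesCountableProducts'_yoneda_obj, fun J _ =>
    ⟨ObjectProperty.preservesColimitsOfShape_lift_yoneda _ _
      fun _ hF => hF.preservesLimitsOfShape_op_discrete J⟩⟩

/-- each representable presheaf preserves countable products, so the Yoneda
embedding factors through the full subcategory `C̄` of countable-product-preserving
presheaves; and the resulting embedding `y : C ⥤ C̄` preserves countable coproducts
(the cocone with vertex `C(−, ∐ⱼ cⱼ)` and legs given by postcomposition with the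
coproduct injections is a colimit cocone, for every countable family `c : J → C`). -/
theorem stmt10 {C : Type u} [SmallCategory C]
    (hC : ∀ (J : Type u), Countable J → HasColimitsOfShape (Discrete J) C) :
    ∃ hrep : ∀ x : C, PreservesCountableProducts' (yoneda.obj x),
      ∀ (J : Type u), Countable J →
        Nonempty (PreservesColimitsOfShape (Discrete J)
          (ObjectProperty.lift (PreservesCountableProducts' (C := C)) yoneda hrep)) :=
  stmt10_general
end

section
/- Let X be a metrizable, second-countable (equivalently separable metrizable) topological space equipped with its Borel σ-algebra, and equip the set C(X, ℝ≥0) of continuous functions from X to the nonnegative reals with the σ-algebra generated by the sets {f | f(x) ≤ r} for x ∈ X and r ∈ ℝ≥0. Then the evaluation map ev : C(X, ℝ≥0) × X → ℝ≥0, ev(f,x) = f(x), is measurable with respect to the product σ-algebra. -/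
/-! The evaluation map is continuous in `x` for fixed `f` and measurable in `f` for fixed `x`;
over a separable metrizable space such a Carathéodory function is jointly measurable, because
`x` can be approximated by measurable simple functions with values in `X`. -/

open MeasureTheory
open scoped NNReal

/-- The σ-algebra on `C(X, ℝ≥0)` generated by the sets `{f | f x ≤ r}`. -/
def densitySigmaAlgebra (X : Type*) [TopologicalSpace X] :
    MeasurableSpace C(X, ℝ≥0) :=
  MeasurableSpace.generateFrom
    {S | ∃ (x : X) (r : ℝ≥0), S = {f : C(X, ℝ≥0) | f x ≤ r}}

lemma measurable_densitySigmaAlgebra_eval {X : Type*} [TopologicalSpace X] (x : X) :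
    @Measurable C(X, ℝ≥0) ℝ≥0 (densitySigmaAlgebra X) _ (fun f => f x) := by
  let _ : MeasurableSpace C(X, ℝ≥0) := densitySigmaAlgebra X
  exact measurable_of_Iic fun r => MeasurableSpace.measurableSet_generateFrom ⟨x, r, rfl⟩

/-- for a separable metrizable (= metrizable second-countable) space `X`
with its Borel σ-algebra, the evaluation map `ev : C(X, ℝ≥0) × X → ℝ≥0`,
`ev(f,x) = f(x)`, is measurable (w.r.t. the product of the σ-algebra generated by the
sets `{f | f x ≤ r}` and the Borel σ-algebra on `X`). -/
theorem stmt15 {X : Type*} [TopologicalSpace X] [TopologicalSpace.MetrizableSpace X]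
    [SecondCountableTopology X] [mX : MeasurableSpace X] [BorelSpace X] :
    @Measurable (C(X, ℝ≥0) × X) ℝ≥0
      (@Prod.instMeasurableSpace _ _ (densitySigmaAlgebra X) mX) _
      (fun p => p.1 p.2) := by
  let _ : MeasurableSpace C(X, ℝ≥0) := densitySigmaAlgebra X
  have hjoint : Measurable (Function.uncurry fun (x : X) (f : C(X, ℝ≥0)) => f x) :=
    measurable_uncurry_of_continuous_of_measurable (fun f => f.continuous)
      measurable_densitySigmaAlgebra_eval
  exact hjoint.comp measurable_swap
end
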